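/- The following are equivalent: (a) there exist a nonzero real number c and a ℂ-linear derivation D of 𝔤 with D(𝔤^{1,0}) ⊆ 𝔤^{1,0} and D(𝔤^{0,1}) ⊆ 𝔤^{0,1} such that P X = c·X + D X for every X ∈ 𝔤^{1,0}; (b) there exists A > 0 such that g_{i j̄} = A·δ_{ij} for all 1 ≤ i, j ≤ r and g_{i,(r+j)‾} = 0 for all 1 ≤ i ≤ r and 1 ≤ j ≤ s. Moreover, when (a) and (b) hold, necessarily c = −1/(4A). (This characterizes the left-invariant Hermitian metrics on an Oeljeklaus-Toma manifold which lift to an expanding algebraic soliton of the Chern-Ricci flow on the universal covering.) -/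

import Mathlib

open Complex
open scoped ComplexOrder

/-!
A derivation `D` preserving `𝔤^{1,0}` and `𝔤^{0,1}` kills every `Z_k`: applying it to
`[Z_k, Z̄_k] = -(i/2)(Z_k + Z̄_k)` and comparing coefficients forces the `Z`-components of `D Z_k`
to vanish, and its `W_j`-components too because `λ_{kj} ≠ i/2`. Hence `P = c + D` on `𝔤^{1,0}`
amounts to `P Z_k = c Z_k` for all `k`. Conversely, as `P W_i = 0`, one may take `D = -c` on the
`W_i, W̄_i` and `D = 0` on the `Z_k, Z̄_k`: the `Z`'s span a subalgebra and the `W`'s an abelian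
ideal, so this multiple of the projection onto the ideal is a derivation.

Since `P X_a = Σ_b (ρ g⁻¹)_{ab} X_b` and the `Z_k`-row of `ρ` is `-¼ e_k`, the condition
`P Z_k = c Z_k` says that the `Z_k`-row of `g⁻¹` is `-4c e_k`, i.e. that the `Z_k`-row of `g` is
`A e_k` with `A = -1/(4c)`; positivity of `g` forces `A > 0`.
-/

section Span

variable {R M ι κ : Type*} [Semiring R] [AddCommMonoid M] [Module R M]

theorem Submodule.exists_eq_sum_add_sum_of_mem_span_range_union [Fintype ι] [Fintype κ]
    {f : ι → M} {g : κ → M} {x : M} (hx : x ∈ Submodule.span R (Set.range f ∪ Set.range g)) :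
    ∃ (α : ι → R) (β : κ → R), x = ∑ l, α l • f l + ∑ j, β j • g j := by
  rw [← Set.Sum.elim_range, Submodule.mem_span_range_iff_exists_fun] at hx
  obtain ⟨c, rfl⟩ := hx
  exact ⟨c ∘ Sum.inl, c ∘ Sum.inr, by simp [Fintype.sum_sum_type]⟩

theorem LinearMap.apply_mem_span_of_forall_mem {f : M →ₗ[R] M} {s : Set M}
    (h : ∀ x ∈ s, f x ∈ Submodule.span R s) {x : M} (hx : x ∈ Submodule.span R s) :
    f x ∈ Submodule.span R s :=
  (LinearMap.map_span_le f s _).mpr h (Submodule.mem_map_of_mem hx)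

end Span

section LinearAlgebra

variable {R M ι : Type*} [Fintype ι] [DecidableEq ι]

theorem LinearIndependent.apply_eq_smul_iff [CommRing R] [AddCommGroup M] [Module R M]
    {X : ι → M} (hX : LinearIndependent R X) {f : M →ₗ[R] M} {A : Matrix ι ι R}
    (hf : ∀ a, f (X a) = ∑ b, A a b • X b) (a : ι) (d : R) :
    f (X a) = d • X a ↔ A a = Pi.single a d := by
  have hd : d • X a = ∑ b, (Pi.single a d : ι → R) b • X b := by
    simp [Pi.single_apply, ite_smul]
  rw [hf, hd, funext_iff]
  exact ⟨Fintype.linearIndependent_iffₛ.mp hX _ _, fun h => by simp only [h]⟩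

theorem Matrix.eq_pi_single_inv_of_mul_eq_one [Field R] {A B : Matrix ι ι R} (h : A * B = 1)
    {i : ι} {t : R} (ht : t ≠ 0) (hA : A i = Pi.single i t) : B i = Pi.single i t⁻¹ := by
  funext j
  have hij := congr_fun (congr_fun h i) j
  simp only [Matrix.mul_apply, hA, Pi.single_apply, ite_mul, zero_mul, Finset.sum_ite_eq',
    Finset.mem_univ, if_true, Matrix.one_apply] at hij
  rw [Pi.single_apply]
  split_ifs with hji
  · subst hji; rw [if_pos rfl] at hij; exact eq_inv_of_mul_eq_one_right hij
  · rw [if_neg (Ne.symm hji)] at hij; exact (mul_eq_zero.mp hij).resolve_left ht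

end LinearAlgebra

section Derivation

variable {R L ι : Type*} [CommRing R] [LieRing L] [LieAlgebra R L]

theorem Module.Basis.map_lie_of_map_lie_basis (b : Module.Basis ι R L) {D : L →ₗ[R] L}
    (h : ∀ i j, D ⁅b i, b j⁆ = ⁅D (b i), b j⁆ + ⁅b i, D (b j)⁆) (x y : L) :
    D ⁅x, y⁆ = ⁅D x, y⁆ + ⁅x, D y⁆ := by
  let defect : L →ₗ[R] L →ₗ[R] L :=
    LinearMap.mk₂ R (fun x y => D ⁅x, y⁆ - ⁅D x, y⁆ - ⁅x, D y⁆)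
      (fun _ _ _ => by simp only [add_lie, map_add]; abel)
      (fun _ _ _ => by simp only [smul_lie, map_smul, smul_sub])
      (fun _ _ _ => by simp only [lie_add, map_add]; abel)
      (fun _ _ _ => by simp only [lie_smul, map_smul, smul_sub])
  have hdefect : defect = 0 := LinearMap.ext_basis b b fun i j => by simp [defect, h]
  have := congr($hdefect x y)
  simpa [defect, sub_sub, sub_eq_zero] using this

theorem Module.Basis.map_lie_of_apply_eq_smul (b : Module.Basis ι R L) {D : L →ₗ[R] L}
    (w : ι → R) (hD : ∀ t, D (b t) = w t • b t)
    (h : ∀ i j, D ⁅b i, b j⁆ = (w i + w j) • ⁅b i, b j⁆) (x y : L) :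
    D ⁅x, y⁆ = ⁅D x, y⁆ + ⁅x, D y⁆ :=
  b.map_lie_of_map_lie_basis (fun i j => by rw [h, hD, hD, add_smul, smul_lie, lie_smul]) x y

end Derivation

structure IsOeljeklausTomaBasis {r s : ℕ} (lam : Fin r → Fin s → ℂ) {L : Type*} [LieRing L]
    [LieAlgebra ℂ L] (bas : Module.Basis ((Fin r ⊕ Fin r) ⊕ (Fin s ⊕ Fin s)) ℂ L)
    (Z Zb : Fin r → L) (W Wb : Fin s → L) : Prop where
  Z_eq : ∀ k, Z k = bas (Sum.inl (Sum.inl k))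
  Zb_eq : ∀ k, Zb k = bas (Sum.inl (Sum.inr k))
  W_eq : ∀ i, W i = bas (Sum.inr (Sum.inl i))
  Wb_eq : ∀ i, Wb i = bas (Sum.inr (Sum.inr i))
  lie_Z_Zb : ∀ k l, ⁅Z k, Zb l⁆ = if k = l then (-(I / 2)) • (Z k + Zb k) else 0
  lie_Z_Z : ∀ k l, ⁅Z k, Z l⁆ = 0
  lie_Zb_Zb : ∀ k l, ⁅Zb k, Zb l⁆ = 0
  lie_Z_W : ∀ k i, ⁅Z k, W i⁆ = (-(lam k i)) • W i
  lie_Zb_Wb : ∀ k i, ⁅Zb k, Wb i⁆ = (-(starRingEnd ℂ (lam k i))) • Wb i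
  lie_Z_Wb : ∀ k i, ⁅Z k, Wb i⁆ = (starRingEnd ℂ (lam k i)) • Wb i
  lie_Zb_W : ∀ k i, ⁅Zb k, W i⁆ = (lam k i) • W i
  lie_W_W : ∀ i j, ⁅W i, W j⁆ = 0
  lie_Wb_Wb : ∀ i j, ⁅Wb i, Wb j⁆ = 0
  lie_W_Wb : ∀ i j, ⁅W i, Wb j⁆ = 0

namespace IsOeljeklausTomaBasis

variable {r s : ℕ} {lam : Fin r → Fin s → ℂ} {L : Type*} [LieRing L] [LieAlgebra ℂ L]
  {bas : Module.Basis ((Fin r ⊕ Fin r) ⊕ (Fin s ⊕ Fin s)) ℂ L} {Z Zb : Fin r → L} {W Wb : Fin s → L}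

theorem lie_Zb_Z (H : IsOeljeklausTomaBasis lam bas Z Zb W Wb) (k l : Fin r) :
    ⁅Zb l, Z k⁆ = if k = l then (I / 2) • (Z k + Zb k) else 0 := by
  rw [← lie_skew, H.lie_Z_Zb]; split_ifs <;> simp [add_comm]

theorem lie_W_Z (H : IsOeljeklausTomaBasis lam bas Z Zb W Wb) (i : Fin s) (k : Fin r) :
    ⁅W i, Z k⁆ = lam k i • W i := by
  rw [← lie_skew, H.lie_Z_W, neg_smul, neg_neg]

theorem lie_Wb_Z (H : IsOeljeklausTomaBasis lam bas Z Zb W Wb) (i : Fin s) (k : Fin r) :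
    ⁅Wb i, Z k⁆ = -(starRingEnd ℂ (lam k i) • Wb i) := by
  rw [← lie_skew, H.lie_Z_Wb]

theorem lie_W_Zb (H : IsOeljeklausTomaBasis lam bas Z Zb W Wb) (i : Fin s) (k : Fin r) :
    ⁅W i, Zb k⁆ = -(lam k i • W i) := by
  rw [← lie_skew, H.lie_Zb_W]

theorem lie_Wb_Zb (H : IsOeljeklausTomaBasis lam bas Z Zb W Wb) (i : Fin s) (k : Fin r) :
    ⁅Wb i, Zb k⁆ = starRingEnd ℂ (lam k i) • Wb i := by
  rw [← lie_skew, H.lie_Zb_Wb, neg_smul, neg_neg]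

theorem lie_Wb_W (H : IsOeljeklausTomaBasis lam bas Z Zb W Wb) (i j : Fin s) :
    ⁅Wb j, W i⁆ = 0 := by
  rw [← lie_skew, H.lie_W_Wb, neg_zero]

theorem sum_Z_add_sum_W_lie_Zb (H : IsOeljeklausTomaBasis lam bas Z Zb W Wb) (α : Fin r → ℂ)
    (β : Fin s → ℂ) (k : Fin r) :
    ⁅∑ l, α l • Z l + ∑ j, β j • W j, Zb k⁆
      = (-(I / 2) * α k) • (Z k + Zb k) - ∑ j, (lam k j * β j) • W j := by
  simp [add_lie, sum_lie, smul_lie, H.lie_Z_Zb, H.lie_W_Zb, smul_smul, mul_comm, sub_eq_add_neg]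

theorem lie_Z_sum_Zb_add_sum_Wb (H : IsOeljeklausTomaBasis lam bas Z Zb W Wb) (γ : Fin r → ℂ)
    (δ : Fin s → ℂ) (k : Fin r) :
    ⁅Z k, ∑ l, γ l • Zb l + ∑ j, δ j • Wb j⁆
      = (-(I / 2) * γ k) • (Z k + Zb k) + ∑ j, (starRingEnd ℂ (lam k j) * δ j) • Wb j := by
  simp [lie_add, lie_sum, lie_smul, H.lie_Z_Zb, H.lie_Z_Wb, smul_smul, mul_comm]

theorem map_Z_eq_zero (H : IsOeljeklausTomaBasis lam bas Z Zb W Wb)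
    (hlam : ∀ k i, lam k i ≠ I / 2) {D : L →ₗ[ℂ] L}
    (hD : ∀ x y : L, D ⁅x, y⁆ = ⁅D x, y⁆ + ⁅x, D y⁆)
    (h10 : ∀ x ∈ Submodule.span ℂ (Set.range Z ∪ Set.range W),
      D x ∈ Submodule.span ℂ (Set.range Z ∪ Set.range W))
    (h01 : ∀ x ∈ Submodule.span ℂ (Set.range Zb ∪ Set.range Wb),
      D x ∈ Submodule.span ℂ (Set.range Zb ∪ Set.range Wb)) (k : Fin r) :
    D (Z k) = 0 := by
  obtain ⟨α, β, hu⟩ := Submodule.exists_eq_sum_add_sum_of_mem_span_range_union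
    (h10 _ (Submodule.subset_span (.inl ⟨k, rfl⟩)))
  obtain ⟨γ, δ, hv⟩ := Submodule.exists_eq_sum_add_sum_of_mem_span_range_union
    (h01 _ (Submodule.subset_span (.inl ⟨k, rfl⟩)))
  have E := hD (Z k) (Zb k)
  rw [H.lie_Z_Zb, if_pos rfl, map_smul, map_add, hu, hv, H.sum_Z_add_sum_W_lie_Zb,
    H.lie_Z_sum_Zb_add_sum_Wb] at E
  have coord := fun t => congrArg (fun x => bas.repr x t) E
  simp only [H.Z_eq, H.Zb_eq, H.W_eq, H.Wb_eq] at coord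
  have hαk : α k = 0 := by
    simpa [Finsupp.single_apply] using coord (Sum.inl (Sum.inr k))
  have hα : ∀ l, α l = 0 := by
    intro l
    rcases eq_or_ne k l with rfl | hkl
    · exact hαk
    · simpa [Finsupp.single_apply, hkl, I_ne_zero] using coord (Sum.inl (Sum.inl l))
  have hβ : ∀ j, β j = 0 := fun j => by
    simpa [Finsupp.single_apply, (hlam k j).symm] using coord (Sum.inr (Sum.inl j))
  simp [hu, hα, hβ]

theorem exists_derivation_zero_on_Z_smul_on_W (H : IsOeljeklausTomaBasis lam bas Z Zb W Wb)
    (μ : ℂ) :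
    ∃ D : L →ₗ[ℂ] L, (∀ x y : L, D ⁅x, y⁆ = ⁅D x, y⁆ + ⁅x, D y⁆) ∧
      (∀ k, D (Z k) = 0) ∧ (∀ k, D (Zb k) = 0) ∧ (∀ i, D (W i) = μ • W i) ∧
      (∀ i, D (Wb i) = μ • Wb i) := by
  let w : (Fin r ⊕ Fin r) ⊕ (Fin s ⊕ Fin s) → ℂ := Sum.elim 0 fun _ => μ
  let D := bas.constr ℂ fun t => w t • bas t
  have hD : ∀ t, D (bas t) = w t • bas t := bas.constr_basis ℂ _
  have hDZ : ∀ k, D (Z k) = 0 := fun k => by simp [H.Z_eq, hD, w]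
  have hDZb : ∀ k, D (Zb k) = 0 := fun k => by simp [H.Zb_eq, hD, w]
  have hDW : ∀ i, D (W i) = μ • W i := fun i => by simp [H.W_eq, hD, w]
  have hDWb : ∀ i, D (Wb i) = μ • Wb i := fun i => by simp [H.Wb_eq, hD, w]
  refine ⟨D, bas.map_lie_of_apply_eq_smul w hD ?_, hDZ, hDZb, hDW, hDWb⟩
  rintro ((k | k) | (i | i)) ((l | l) | (j | j)) <;>
    simp only [← H.Z_eq, ← H.Zb_eq, ← H.W_eq, ← H.Wb_eq] <;>
    simp [w, apply_ite D, H.lie_Z_Zb, H.lie_Z_Z, H.lie_Zb_Zb, H.lie_Z_W, H.lie_Zb_Wb,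
      H.lie_Z_Wb, H.lie_Zb_W, H.lie_W_W, H.lie_Wb_Wb, H.lie_W_Wb, H.lie_Zb_Z, H.lie_W_Z,
      H.lie_Wb_Z, H.lie_W_Zb, H.lie_Wb_Zb, H.lie_Wb_W, hDZ, hDZb, hDW, hDWb, smul_smul, mul_comm]

theorem exists_derivation_iff (H : IsOeljeklausTomaBasis lam bas Z Zb W Wb)
    (hlam : ∀ k i, lam k i ≠ I / 2) {P : L →ₗ[ℂ] L} (hPW : ∀ i, P (W i) = 0) (c : ℂ) :
    (∃ D : L →ₗ[ℂ] L, (∀ x y : L, D ⁅x, y⁆ = ⁅D x, y⁆ + ⁅x, D y⁆) ∧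
        (∀ x ∈ Submodule.span ℂ (Set.range Z ∪ Set.range W),
          D x ∈ Submodule.span ℂ (Set.range Z ∪ Set.range W)) ∧
        (∀ x ∈ Submodule.span ℂ (Set.range Zb ∪ Set.range Wb),
          D x ∈ Submodule.span ℂ (Set.range Zb ∪ Set.range Wb)) ∧
        (∀ v ∈ Submodule.span ℂ (Set.range Z ∪ Set.range W), P v = c • v + D v)) ↔
      ∀ k, P (Z k) = c • Z k := by
  constructor
  · rintro ⟨D, hD, h10, h01, hPD⟩ k
    rw [hPD _ (Submodule.subset_span (.inl ⟨k, rfl⟩)), H.map_Z_eq_zero hlam hD h10 h01, add_zero]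
  · intro hPZ
    obtain ⟨D, hD, hDZ, hDZb, hDW, hDWb⟩ := H.exists_derivation_zero_on_Z_smul_on_W (-c)
    refine ⟨D, hD, fun x => LinearMap.apply_mem_span_of_forall_mem ?_,
      fun x => LinearMap.apply_mem_span_of_forall_mem ?_,
      fun v hv => LinearMap.eqOn_span' (g := c • LinearMap.id + D) ?_ hv⟩
    · rintro _ (⟨k, rfl⟩ | ⟨i, rfl⟩)
      · rw [hDZ]; exact Submodule.zero_mem _
      · rw [hDW]; exact Submodule.smul_mem _ _ (Submodule.subset_span (.inr ⟨i, rfl⟩))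
    · rintro _ (⟨k, rfl⟩ | ⟨i, rfl⟩)
      · rw [hDZb]; exact Submodule.zero_mem _
      · rw [hDWb]; exact Submodule.smul_mem _ _ (Submodule.subset_span (.inr ⟨i, rfl⟩))
    · rintro _ (⟨k, rfl⟩ | ⟨i, rfl⟩)
      · simp [hPZ, hDZ]
      · simp [hPW, hDW]

theorem linearIndependent_sumElim_Z_W (H : IsOeljeklausTomaBasis lam bas Z Zb W Wb) :
    LinearIndependent ℂ (Sum.elim Z W) := by
  have : Sum.elim Z W = bas ∘ Sum.elim (Sum.inl ∘ Sum.inl) (Sum.inr ∘ Sum.inl) := by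
    ext (k | i) <;> simp [H.Z_eq, H.W_eq]
  rw [this]
  exact bas.linearIndependent.comp _ <| by
    rintro (k | i) (l | j) h <;> simp_all

theorem apply_Z_eq_smul_iff (H : IsOeljeklausTomaBasis lam bas Z Zb W Wb)
    {ρ ginv : Matrix (Fin r ⊕ Fin s) (Fin r ⊕ Fin s) ℂ}
    (hρ : ∀ k, ρ (Sum.inl k) = Pi.single (Sum.inl k) (-(1 / 4))) {P : L →ₗ[ℂ] L}
    (hP : ∀ a, P (Sum.elim Z W a) = ∑ b, (ρ * ginv) a b • Sum.elim Z W b) (k : Fin r) (d : ℂ) :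
    P (Z k) = d • Z k ↔ ginv (Sum.inl k) = Pi.single (Sum.inl k) (-4 * d) := by
  rw [show Z k = Sum.elim Z W (Sum.inl k) from rfl,
    H.linearIndependent_sumElim_Z_W.apply_eq_smul_iff hP, Matrix.mul_apply_eq_vecMul, hρ,
    Matrix.single_vecMul, Matrix.row, show (-(1 / 4) : ℂ) = (-4)⁻¹ by norm_num,
    inv_smul_eq_iff₀ (by norm_num), ← smul_eq_mul, Pi.single_smul']

end IsOeljeklausTomaBasis

section Metric

variable {r s : ℕ}

theorem forall_apply_inl_eq_pi_single_iff (g : Fin r ⊕ Fin s → Fin r ⊕ Fin s → ℂ) (A : ℂ) :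
    ((∀ i j : Fin r, g (Sum.inl i) (Sum.inl j) = if i = j then A else 0) ∧
        ∀ (i : Fin r) (j : Fin s), g (Sum.inl i) (Sum.inr j) = 0) ↔
      ∀ k, g (Sum.inl k) = Pi.single (Sum.inl k) A := by
  constructor
  · rintro ⟨hdiag, hoff⟩ k
    ext (l | j) <;> simp [hdiag, hoff, Pi.single_apply, eq_comm]
  · intro h
    exact ⟨fun i j => by simp [h, Pi.single_apply, eq_comm], fun i j => by simp [h]⟩

theorem exists_inv_row_eq_iff_exists_row_eq (hr : 1 ≤ r)
    {g ginv : Matrix (Fin r ⊕ Fin s) (Fin r ⊕ Fin s) ℂ}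
    (hpos : g.PosDef) (hinv : g * ginv = 1) :
    (∃ c : ℝ, c ≠ 0 ∧ ∀ k, ginv (Sum.inl k) = Pi.single (Sum.inl k) (-4 * (c : ℂ))) ↔
      ∃ A : ℝ, 0 < A ∧ ∀ k, g (Sum.inl k) = Pi.single (Sum.inl k) (A : ℂ) := by
  constructor
  · rintro ⟨c, hc, hginv⟩
    have hc' : -4 * (c : ℂ) ≠ 0 := by simpa using hc
    have hg : ∀ k, g (Sum.inl k) = Pi.single (Sum.inl k) (-4 * (c : ℂ))⁻¹ := fun k =>
      Matrix.eq_pi_single_inv_of_mul_eq_one (mul_eq_one_comm.mp hinv) hc' (hginv k)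
    have hA : ((-(1 / (4 * c)) : ℝ) : ℂ) = (-4 * (c : ℂ))⁻¹ := by push_cast; ring
    refine ⟨-(1 / (4 * c)), ?_, by simpa only [hA] using hg⟩
    have := hpos.diag_pos (i := Sum.inl ⟨0, hr⟩)
    rwa [hg, Pi.single_eq_same, ← hA, Complex.zero_lt_real] at this
  · rintro ⟨A, hA, hg⟩
    have hA' : (A : ℂ) ≠ 0 := by exact_mod_cast hA.ne'
    refine ⟨-(1 / (4 * A)), by simp [hA.ne'], fun k => ?_⟩
    rw [Matrix.eq_pi_single_inv_of_mul_eq_one hinv hA' (hg k)]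
    push_cast
    ring_nf

theorem eq_neg_one_div_four_mul_of_row_eq (hr : 1 ≤ r)
    {g ginv : Matrix (Fin r ⊕ Fin s) (Fin r ⊕ Fin s) ℂ}
    (hinv : g * ginv = 1) {c A : ℝ}
    (hginv : ∀ k, ginv (Sum.inl k) = Pi.single (Sum.inl k) (-4 * (c : ℂ)))
    (hg : ∀ k, g (Sum.inl k) = Pi.single (Sum.inl k) (A : ℂ)) : c = -(1 / (4 * A)) := by
  have h := congr_fun (congr_fun hinv (Sum.inl ⟨0, hr⟩)) (Sum.inl ⟨0, hr⟩)
  simp only [Matrix.mul_apply, hg, hginv, Pi.single_apply, ite_mul, zero_mul, Finset.sum_ite_eq',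
    Finset.mem_univ, if_true, Matrix.one_apply_eq] at h
  have h' : A * (-4 * c) = 1 := by exact_mod_cast h
  have hA : A ≠ 0 := left_ne_zero_of_mul_eq_one h'
  field_simp
  linarith

end Metric

theorem stmt_11 (r s : ℕ) (hr : 1 ≤ r)
    (lam : Fin r → Fin s → ℂ) (hlam : ∀ k i, lam k i ≠ I / 2)
    (L : Type*) [LieRing L] [LieAlgebra ℂ L]
    (bas : Module.Basis ((Fin r ⊕ Fin r) ⊕ (Fin s ⊕ Fin s)) ℂ L)
    (Z Zb : Fin r → L) (W Wb : Fin s → L)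
    (hZ : ∀ k, Z k = bas (Sum.inl (Sum.inl k)))
    (hZb : ∀ k, Zb k = bas (Sum.inl (Sum.inr k)))
    (hW : ∀ i, W i = bas (Sum.inr (Sum.inl i)))
    (hWb : ∀ i, Wb i = bas (Sum.inr (Sum.inr i)))
    (hZZb : ∀ k l, ⁅Z k, Zb l⁆ = if k = l then (-(I / 2)) • (Z k + Zb k) else 0)
    (hZZ : ∀ k l, ⁅Z k, Z l⁆ = 0)
    (hZbZb : ∀ k l, ⁅Zb k, Zb l⁆ = 0)
    (hZW : ∀ k i, ⁅Z k, W i⁆ = (-(lam k i)) • W i)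
    (hZbWb : ∀ k i, ⁅Zb k, Wb i⁆ = (-(starRingEnd ℂ (lam k i))) • Wb i)
    (hZWb : ∀ k i, ⁅Z k, Wb i⁆ = (starRingEnd ℂ (lam k i)) • Wb i)
    (hZbW : ∀ k i, ⁅Zb k, W i⁆ = (lam k i) • W i)
    (hWW : ∀ i j, ⁅W i, W j⁆ = 0)
    (hWbWb : ∀ i j, ⁅Wb i, Wb j⁆ = 0)
    (hWWb : ∀ i j, ⁅W i, Wb j⁆ = 0)
    -- the frame `{X_1,…,X_{r+s}} = {Z_1,…,Z_r,W_1,…,W_s}` of `𝔤^{1,0}`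
    (Xf : Fin r ⊕ Fin s → L)
    (hXf : ∀ k : Fin r, Xf (Sum.inl k) = Z k)
    (hXfW : ∀ i : Fin s, Xf (Sum.inr i) = W i)
    -- a positive-definite Hermitian matrix `g` with inverse `ginv`
    (g ginv : Fin r ⊕ Fin s → Fin r ⊕ Fin s → ℂ)
    (hposdef : (Matrix.of g).PosDef)
    (hinv : ∀ a b, ∑ cc, g a cc * ginv cc b = if a = b then 1 else 0)
    -- the matrix of the Chern-Ricci form `ρ_C = −ω_∞`
    (ρc : Fin r ⊕ Fin s → Fin r ⊕ Fin s → ℂ)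
    (hρc : ∀ a b, ρc a b = match a, b with
      | Sum.inl i, Sum.inl j => if i = j then -(1 / 4) else 0
      | _, _ => 0)
    -- the associated endomorphism `P`
    (P : L →ₗ[ℂ] L)
    (hP : ∀ a, P (Xf a) = ∑ b, (∑ cc, ρc a cc * ginv cc b) • Xf b) :
    ((∃ c : ℝ, c ≠ 0 ∧ ∃ D : L →ₗ[ℂ] L,
        (∀ x y : L, D ⁅x, y⁆ = ⁅D x, y⁆ + ⁅x, D y⁆) ∧
        (∀ x ∈ Submodule.span ℂ (Set.range Z ∪ Set.range W),
          D x ∈ Submodule.span ℂ (Set.range Z ∪ Set.range W)) ∧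
        (∀ x ∈ Submodule.span ℂ (Set.range Zb ∪ Set.range Wb),
          D x ∈ Submodule.span ℂ (Set.range Zb ∪ Set.range Wb)) ∧
        (∀ v ∈ Submodule.span ℂ (Set.range Z ∪ Set.range W),
          P v = (c : ℂ) • v + D v)) ↔
      (∃ A : ℝ, 0 < A ∧
        (∀ i j : Fin r, g (Sum.inl i) (Sum.inl j) = if i = j then (A : ℂ) else 0) ∧
        (∀ (i : Fin r) (j : Fin s), g (Sum.inl i) (Sum.inr j) = 0))) ∧
    (∀ (c A : ℝ) (D : L →ₗ[ℂ] L), c ≠ 0 →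
      (∀ x y : L, D ⁅x, y⁆ = ⁅D x, y⁆ + ⁅x, D y⁆) →
      (∀ x ∈ Submodule.span ℂ (Set.range Z ∪ Set.range W),
        D x ∈ Submodule.span ℂ (Set.range Z ∪ Set.range W)) →
      (∀ x ∈ Submodule.span ℂ (Set.range Zb ∪ Set.range Wb),
        D x ∈ Submodule.span ℂ (Set.range Zb ∪ Set.range Wb)) →
      (∀ v ∈ Submodule.span ℂ (Set.range Z ∪ Set.range W),
        P v = (c : ℂ) • v + D v) →
      0 < A →
      (∀ i j : Fin r, g (Sum.inl i) (Sum.inl j) = if i = j then (A : ℂ) else 0) →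
      (∀ (i : Fin r) (j : Fin s), g (Sum.inl i) (Sum.inr j) = 0) →
      c = -(1 / (4 * A))) := by
  have H : IsOeljeklausTomaBasis lam bas Z Zb W Wb :=
    ⟨hZ, hZb, hW, hWb, hZZb, hZZ, hZbZb, hZW, hZbWb, hZWb, hZbW, hWW, hWbWb, hWWb⟩
  obtain rfl : Xf = Sum.elim Z W := funext (Sum.rec hXf hXfW)
  have hg : Matrix.of g * Matrix.of ginv = 1 := Matrix.ext hinv
  have hρ : ∀ k, Matrix.of ρc (Sum.inl k) = Pi.single (Sum.inl k) (-(1 / 4)) := fun k => by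
    ext (l | i) <;> simp [hρc, Pi.single_apply, eq_comm]
  have hPW : ∀ i, P (W i) = 0 := fun i => by simpa [hρc] using hP (Sum.inr i)
  have hsoliton (c : ℝ) := (H.exists_derivation_iff hlam hPW c).trans
    (forall_congr' fun k => H.apply_Z_eq_smul_iff hρ hP k c)
  simp only [hsoliton, forall_apply_inl_eq_pi_single_iff]
  constructor
  · exact exists_inv_row_eq_iff_exists_row_eq hr hposdef hg
  · intro c A D _ hD h10 h01 hPD _ hgZ hgW
    exact eq_neg_one_div_four_mul_of_row_eq hr hg ((hsoliton c).mp ⟨D, hD, h10, h01, hPD⟩)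
      ((forall_apply_inl_eq_pi_single_iff g A).mp ⟨hgZ, hgW⟩)
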